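/- arXiv:1711.01540 — 2 statements merged into one kernel-verified Lean document; each statement's English description precedes it below -/
import Mathlib

section
/- Let T = M_w E M_u be a bounded operator on L^p(F). Then ker(T^2) = ker(T^{n+2}) for every n ≥ 1; in particular the ascent of T is at most 2. -/
/-!
If `T f = w E(u f)`, then formally `T² f = w E(u w) E(u f)` and `T³ f = w E(u w)² E(u f)`, so
`T³ f = 0` forces `T² f = 0`. Since `E(u w)` need not exist, we avoid it: with `H = E(u f)`,
`φ = E(u T f)` and `ψ = E(u T² f)`, pulling the `m`-measurable factors `φ` and `H` out of
`E(φ · u T f) = E(φ H · u w) = E(H · u T² f)` (after truncating them to sets where they are bounded)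
gives `φ² = H ψ`. Then `w ψ = 0` implies `(w φ)² = w H · w ψ = 0`, i.e. `T² f = 0`.
The pull-out needs `u g` integrable for every `g`; otherwise `T` vanishes off a proper subgroup
of `Lp`, hence everywhere.
-/

open MeasureTheory
open scoped ENNReal

theorem mul_eq_zero_of_mul_eq_zero_of_mul_self_eq {R : Type*} [CommRing R] [NoZeroDivisors R]
    {w h φ ψ : R} (hψ : w * ψ = 0) (hφ : φ * φ = h * ψ) : w * φ = 0 :=
  mul_self_eq_zero.mp (by linear_combination (w * h) * hψ + w ^ 2 * hφ)

section CondExp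

variable {X : Type*} {m m0 : MeasurableSpace X} {μ : Measure X}

theorem condExp_mul_of_stronglyMeasurable_left_of_bound (hm : m ≤ m0) {c a : X → ℝ} {C : ℝ}
    (hc : StronglyMeasurable[m] c) (hcC : ∀ x, ‖c x‖ ≤ C) (ha : Integrable a μ) :
    μ[c * a | m] =ᵐ[μ] c * μ[a | m] :=
  condExp_mul_of_stronglyMeasurable_left hc
    (ha.bdd_mul (hc.mono hm).aestronglyMeasurable (.of_forall hcC)) ha

theorem mul_condExp_ae_eq_of_mul_ae_eq (hm : m ≤ m0) {f g a b : X → ℝ}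
    (hf : StronglyMeasurable[m] f) (hg : StronglyMeasurable[m] g)
    (ha : Integrable a μ) (hb : Integrable b μ) (h : f * a =ᵐ[μ] g * b) :
    f * μ[a | m] =ᵐ[μ] g * μ[b | m] := by
  have truncated : ∀ n : ℕ, ∀ᵐ x ∂μ,
      ‖f x‖ ≤ n → ‖g x‖ ≤ n → f x * μ[a | m] x = g x * μ[b | m] x := by
    intro n
    set s := {x | ‖f x‖ ≤ n} ∩ {x | ‖g x‖ ≤ n}
    have hs : MeasurableSet[m] s :=
      (hf.norm.measurableSet_le stronglyMeasurable_const).inter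
        (hg.norm.measurableSet_le stronglyMeasurable_const)
    have bound : ∀ k : X → ℝ, (∀ x ∈ s, ‖k x‖ ≤ n) → ∀ x, ‖s.indicator k x‖ ≤ n :=
      fun k hk x => (norm_indicator_eq_indicator_norm (s := s) (f := k) x).trans_le
        (Set.indicator_apply_le' (hk x) fun _ => n.cast_nonneg)
    have hs_eq : s.indicator f * a =ᵐ[μ] s.indicator g * b := by
      filter_upwards [h] with x hx
      by_cases hxs : x ∈ s
      · simpa [Set.indicator_of_mem hxs] using hx
      · simp [Set.indicator_of_notMem hxs]
    have key : s.indicator f * μ[a | m] =ᵐ[μ] s.indicator g * μ[b | m] := calc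
      _ =ᵐ[μ] μ[s.indicator f * a | m] :=
        (condExp_mul_of_stronglyMeasurable_left_of_bound hm (hf.indicator hs)
          (bound f fun _ hx => hx.1) ha).symm
      _ =ᵐ[μ] μ[s.indicator g * b | m] := condExp_congr_ae hs_eq
      _ =ᵐ[μ] _ :=
        condExp_mul_of_stronglyMeasurable_left_of_bound hm (hg.indicator hs)
          (bound g fun _ hx => hx.2) hb
    filter_upwards [key] with x hx hfx hgx
    simpa [Set.indicator_of_mem (show x ∈ s from ⟨hfx, hgx⟩)] using hx
  filter_upwards [ae_all_iff.2 truncated] with x hx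
  exact hx ⌈max ‖f x‖ ‖g x‖⌉₊ ((le_max_left _ _).trans (Nat.le_ceil _))
    ((le_max_right _ _).trans (Nat.le_ceil _))

end CondExp

section WeightedCondExp

variable {X : Type*} {m0 : MeasurableSpace X}

def IsWeightedCondExp {p : ℝ≥0∞} (m : MeasurableSpace X) (μ : Measure[m0] X) (u w : X → ℝ)
    (T : Module.End ℝ (Lp ℝ p μ)) : Prop :=
  ∀ f : Lp ℝ p μ, (T f : X → ℝ) =ᵐ[μ] fun x => w x * (μ[fun y => u y * (f : X → ℝ) y | m]) x

def integrableMulSubgroup (μ : Measure X) (p : ℝ≥0∞) (u : X → ℝ) : AddSubgroup (Lp ℝ p μ) where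
  carrier := {g | Integrable (fun x => u x * g x) μ}
  zero_mem' := (integrable_zero X ℝ μ).congr <| by
    filter_upwards [Lp.coeFn_zero ℝ p μ] with x hx
    simp only [Pi.zero_apply, hx, mul_zero]
  add_mem' {f g} hf hg := (hf.add hg).congr <| by
    filter_upwards [Lp.coeFn_add f g] with x hx
    simp only [Pi.add_apply, hx, mul_add]
  neg_mem' {f} hf := hf.neg.congr <| by
    filter_upwards [Lp.coeFn_neg f] with x hx
    simp only [Pi.neg_apply, hx, mul_neg]

variable {m : MeasurableSpace X} {μ : Measure[m0] X} {p : ℝ≥0∞} {u w : X → ℝ}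
  {T : Module.End ℝ (Lp ℝ p μ)}

theorem IsWeightedCondExp.apply_eq_zero_of_not_integrable (hT : IsWeightedCondExp m μ u w T)
    {g : Lp ℝ p μ} (hg : ¬Integrable (fun x => u x * g x) μ) : T g = 0 := by
  refine Lp.eq_zero_iff_ae_eq_zero.2 ((hT g).trans (.of_eq (funext fun x => ?_)))
  simp [condExp_of_not_integrable hg]

theorem IsWeightedCondExp.eq_zero_or_integrable_mul (hT : IsWeightedCondExp m μ u w T) :
    T = 0 ∨ ∀ g : Lp ℝ p μ, Integrable (fun x => u x * g x) μ := by
  have hcover : ((⊤ : AddSubgroup (Lp ℝ p μ)) : Set (Lp ℝ p μ)) ⊆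
      (LinearMap.ker T).toAddSubgroup ∪ integrableMulSubgroup μ p u := by
    intro g _
    by_cases hg : Integrable (fun x => u x * g x) μ
    · exact Or.inr hg
    · exact Or.inl (hT.apply_eq_zero_of_not_integrable hg)
  rcases AddSubgroupClass.subset_union.1 hcover with hker | hint
  · exact Or.inl (LinearMap.ext fun g => hker (AddSubgroup.mem_top g))
  · exact Or.inr fun g => hint (AddSubgroup.mem_top g)

theorem IsWeightedCondExp.apply_apply_eq_zero (hm : m ≤ m0) (hT : IsWeightedCondExp m μ u w T)
    {f : Lp ℝ p μ} (hf : T (T (T f)) = 0) : T (T f) = 0 := by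
  rcases hT.eq_zero_or_integrable_mul with rfl | hint
  · rfl
  set H := μ[fun y => u y * (f : X → ℝ) y | m]
  set φ := μ[fun y => u y * (T f : X → ℝ) y | m]
  set ψ := μ[fun y => u y * (T (T f) : X → ℝ) y | m]
  have hsq : φ * φ =ᵐ[μ] H * ψ :=
    mul_condExp_ae_eq_of_mul_ae_eq hm stronglyMeasurable_condExp stronglyMeasurable_condExp
      (hint _) (hint _) <| by
        filter_upwards [hT f, hT (T f)] with x h1 h2
        simp only [Pi.mul_apply, h1, h2]
        ring
  have hwψ : ∀ᵐ x ∂μ, w x * ψ x = 0 := by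
    filter_upwards [hT (T (T f)), hf ▸ Lp.coeFn_zero ℝ p μ] with x h1 h2
    rw [← h1, h2, Pi.zero_apply]
  refine Lp.eq_zero_iff_ae_eq_zero.2 ?_
  filter_upwards [hT (T f), hwψ, hsq] with x h1 h2 h3
  exact h1.trans (mul_eq_zero_of_mul_eq_zero_of_mul_self_eq h2 h3)

theorem IsWeightedCondExp.ker_sq_eq_ker_pow_three (hm : m ≤ m0)
    (hT : IsWeightedCondExp m μ u w T) : LinearMap.ker (T ^ 2) = LinearMap.ker (T ^ 3) := by
  refine le_antisymm ?_ fun f hf => hT.apply_apply_eq_zero hm hf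
  rw [pow_succ' T 2]
  exact LinearMap.ker_le_ker_comp _ _

end WeightedCondExp

theorem wce_ascent_le_two_general {X : Type*} {m m0 : MeasurableSpace X} (hm : m ≤ m0)
    (μ : Measure X)
    (u w : X → ℝ) (p : ℝ≥0∞) [Fact (1 ≤ p)]
    (T : Lp ℝ p μ →L[ℝ] Lp ℝ p μ)
    (hT : ∀ f : Lp ℝ p μ, (T f : X → ℝ) =ᵐ[μ]
      fun x => w x * (μ[fun y => u y * (f : X → ℝ) y | m]) x) :
    (∀ n : ℕ, 1 ≤ n → LinearMap.ker (((T ^ 2 : Lp ℝ p μ →L[ℝ] Lp ℝ p μ)) : Lp ℝ p μ →ₗ[ℝ] Lp ℝ p μ) = LinearMap.ker (((T ^ (n + 2) : Lp ℝ p μ →L[ℝ] Lp ℝ p μ)) : Lp ℝ p μ →ₗ[ℝ] Lp ℝ p μ)) ∧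
      LinearMap.ker (((T ^ 2 : Lp ℝ p μ →L[ℝ] Lp ℝ p μ)) : Lp ℝ p μ →ₗ[ℝ] Lp ℝ p μ) = LinearMap.ker (((T ^ 3 : Lp ℝ p μ →L[ℝ] Lp ℝ p μ)) : Lp ℝ p μ →ₗ[ℝ] Lp ℝ p μ) := by
  have hwce : IsWeightedCondExp m μ u w (T : Lp ℝ p μ →ₗ[ℝ] Lp ℝ p μ) := hT
  have hstable := Module.End.ker_pow_constant (hwce.ker_sq_eq_ker_pow_three hm)
  simp only [ContinuousLinearMap.toLinearMap_pow]
  exact ⟨fun n _ => by rw [add_comm]; exact hstable n, hstable 1⟩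

theorem wce_ascent_le_two {X : Type*} {m m0 : MeasurableSpace X} (hm : m ≤ m0)
    (μ : Measure X) [μ.IsComplete] [SigmaFinite μ] [SigmaFinite (μ.trim hm)]
    (u w : X → ℝ) (p : ℝ≥0∞) [Fact (1 ≤ p)]
    (T : Lp ℝ p μ →L[ℝ] Lp ℝ p μ)
    (hT : ∀ f : Lp ℝ p μ, (T f : X → ℝ) =ᵐ[μ]
      fun x => w x * (μ[fun y => u y * (f : X → ℝ) y | m]) x) :
    (∀ n : ℕ, 1 ≤ n → LinearMap.ker (((T ^ 2 : Lp ℝ p μ →L[ℝ] Lp ℝ p μ)) : Lp ℝ p μ →ₗ[ℝ] Lp ℝ p μ) = LinearMap.ker (((T ^ (n + 2) : Lp ℝ p μ →L[ℝ] Lp ℝ p μ)) : Lp ℝ p μ →ₗ[ℝ] Lp ℝ p μ)) ∧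
      LinearMap.ker (((T ^ 2 : Lp ℝ p μ →L[ℝ] Lp ℝ p μ)) : Lp ℝ p μ →ₗ[ℝ] Lp ℝ p μ) = LinearMap.ker (((T ^ 3 : Lp ℝ p μ →L[ℝ] Lp ℝ p μ)) : Lp ℝ p μ →ₗ[ℝ] Lp ℝ p μ) :=
  wce_ascent_le_two_general hm μ u w p T hT
end

section
/- Let T = M_w E M_u be a bounded operator on L^p(F). If E(uw) is bounded away from zero on its support in the sense that there exists C > 0 with |E(uw)| ≥ C almost everywhere (on X), then range(T^2) = range(T^{n+2}) for every n ≥ 1; consequently the descent of T is at most 2. -/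
/-!
Write `e = E(uw)`, so that `|e| ≥ C > 0` makes `1/e` a bounded `m`-measurable multiplier.
For `f ∈ Lᵖ` put `h = f / e`: pulling `1/e` out of the conditional expectations gives
`E(uh) = E(uf)/e`, hence `E(u · Th) = E(uw · E(uf)/e) = E(uf)` and `T²h = Tf`.
The integrability conditions needed for this fail only when `Tf` or `T²f` vanishes
(Mathlib's conditional expectation of a non-integrable function is `0`), so in every case
`T²f ∈ range T³`. Once two consecutive ranges of powers agree, all later ones do.
-/

open MeasureTheory
open scoped ENNReal

namespace Module.End

variable {R M : Type*} [Semiring R] [AddCommMonoid M] [Module R M]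

theorem range_pow_le_range_pow_add {f : Module.End R M} {k : ℕ}
    (h : LinearMap.range (f ^ k) ≤ LinearMap.range (f ^ (k + 1))) (n : ℕ) :
    LinearMap.range (f ^ k) ≤ LinearMap.range (f ^ (k + n)) := by
  induction n with
  | zero => rfl
  | succ n ih =>
    calc LinearMap.range (f ^ k) ≤ LinearMap.range (f ^ (k + 1)) := h
      _ = (LinearMap.range (f ^ k)).map f := by
        rw [pow_succ', mul_eq_comp, LinearMap.range_comp]
      _ ≤ (LinearMap.range (f ^ (k + n))).map f := Submodule.map_mono ih
      _ = LinearMap.range (f ^ (k + (n + 1))) := by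
        rw [← add_assoc, pow_succ', mul_eq_comp, LinearMap.range_comp]

theorem range_pow_eq_range_pow_add {f : Module.End R M} {k : ℕ}
    (h : LinearMap.range (f ^ k) ≤ LinearMap.range (f ^ (k + 1))) (n : ℕ) :
    LinearMap.range (f ^ k) = LinearMap.range (f ^ (k + n)) :=
  (range_pow_le_range_pow_add h n).antisymm <| by
    rw [pow_add, mul_eq_comp]
    exact LinearMap.range_comp_le_range _ _

end Module.End

section CondExp

variable {X : Type*} {m m0 : MeasurableSpace X} {μ : Measure X}

theorem integrable_of_ae_condExp_ne_zero {g : X → ℝ} (h : ∀ᵐ x ∂μ, μ[g | m] x ≠ 0) :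
    Integrable g μ := by
  by_contra hg
  rw [condExp_of_not_integrable hg] at h
  have hμ : μ = 0 := ae_eq_bot.mp (Filter.eventually_false_iff_eq_bot.mp (by simpa using h))
  rw [hμ] at hg
  exact hg integrable_zero_measure

theorem ae_norm_inv_le_of_ae_le_abs {e : X → ℝ} {C : ℝ} (hC : 0 < C)
    (he : ∀ᵐ x ∂μ, C ≤ |e x|) : ∀ᵐ x ∂μ, ‖(e x)⁻¹‖ ≤ C⁻¹ := by
  filter_upwards [he] with x hx
  rw [norm_inv, Real.norm_eq_abs]
  exact inv_anti₀ hC hx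

theorem condExp_div_condExp_mul_ae_eq (hm : m ≤ m0) [SigmaFinite (μ.trim hm)] {g φ : X → ℝ}
    (hφ : StronglyMeasurable[m] φ) (hφg : Integrable (φ * g) μ) {C : ℝ} (hC : 0 < C)
    (hb : ∀ᵐ x ∂μ, C ≤ |μ[g | m] x|) :
    μ[(φ / μ[g | m]) * g | m] =ᵐ[μ] φ := by
  have he_ne : ∀ᵐ x ∂μ, μ[g | m] x ≠ 0 := by
    filter_upwards [hb] with x hx h0
    rw [h0, abs_zero] at hx
    exact hx.not_gt hC
  have hinv : StronglyMeasurable[m] (μ[g | m])⁻¹ :=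
    stronglyMeasurable_condExp.measurable.inv.stronglyMeasurable
  have hint : Integrable ((φ / μ[g | m]) * g) μ := by
    refine (hφg.bdd_mul (hinv.mono hm).aestronglyMeasurable
      (ae_norm_inv_le_of_ae_le_abs hC hb)).congr (Filter.Eventually.of_forall fun x => ?_)
    simp only [Pi.mul_apply, Pi.div_apply, Pi.inv_apply]
    ring
  rw [div_eq_mul_inv]
  filter_upwards [condExp_mul_of_stronglyMeasurable_left (hφ.mul hinv) hint
    (integrable_of_ae_condExp_ne_zero he_ne), he_ne] with x hx hne
  rw [hx]
  simp [hne]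

end CondExp

/-- `T = M_w E M_u`, with `E = μ[· | m]`. -/
def IsWeightedCondExpOperator {X : Type*} (m : MeasurableSpace X) {m0 : MeasurableSpace X}
    (μ : Measure[m0] X) (u w : X → ℝ) {p : ℝ≥0∞} [Fact (1 ≤ p)]
    (T : Lp ℝ p μ →L[ℝ] Lp ℝ p μ) : Prop :=
  ∀ f : Lp ℝ p μ, (T f : X → ℝ) =ᵐ[μ] fun x => w x * (μ[fun y => u y * (f : X → ℝ) y | m]) x

namespace IsWeightedCondExpOperator

variable {X : Type*} {m m0 : MeasurableSpace X} {μ : Measure X} {u w : X → ℝ} {p : ℝ≥0∞}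
  [Fact (1 ≤ p)] {T : Lp ℝ p μ →L[ℝ] Lp ℝ p μ} (hT : IsWeightedCondExpOperator m μ u w T)
include hT

theorem eq_of_condExp_ae_eq {f g : Lp ℝ p μ}
    (h : μ[fun y => u y * f y | m] =ᵐ[μ] μ[fun y => u y * g y | m]) : T f = T g := by
  apply Lp.ext
  filter_upwards [hT f, hT g, h] with x hf hg hx
  rw [hf, hg, hx]

theorem eq_zero_of_not_integrable {f : Lp ℝ p μ} (hf : ¬Integrable (fun y => u y * f y) μ) :
    T f = 0 := by
  rw [Lp.eq_zero_iff_ae_eq_zero]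
  filter_upwards [hT f] with x hx
  simp [hx, condExp_of_not_integrable hf]

theorem mul_apply_ae_eq (f : Lp ℝ p μ) :
    (fun y => u y * T f y) =ᵐ[μ] μ[fun y => u y * f y | m] * fun y => u y * w y := by
  filter_upwards [hT f] with x hx
  simp only [hx, Pi.mul_apply]
  ring

theorem exists_apply_apply_eq (hm : m ≤ m0) [SigmaFinite (μ.trim hm)] {C : ℝ} (hC : 0 < C)
    (hb : ∀ᵐ x ∂μ, C ≤ |μ[fun y => u y * w y | m] x|) {f : Lp ℝ p μ}
    (hf : Integrable (fun y => u y * f y) μ) (hTf : Integrable (fun y => u y * T f y) μ) :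
    ∃ h : Lp ℝ p μ, T (T h) = T f := by
  set e := μ[fun y => u y * w y | m]
  set η := μ[fun y => u y * f y | m]
  have hinv : StronglyMeasurable[m] e⁻¹ :=
    stronglyMeasurable_condExp.measurable.inv.stronglyMeasurable
  have hinv_bound := ae_norm_inv_le_of_ae_le_abs hC hb
  have hmem : MemLp (e⁻¹ * (f : X → ℝ)) p μ := by
    refine (Lp.memLp f).of_le_mul (c := C⁻¹)
      ((hinv.mono hm).aestronglyMeasurable.mul (Lp.aestronglyMeasurable f)) ?_
    filter_upwards [hinv_bound] with x hx
    rw [Pi.mul_apply, norm_mul]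
    exact mul_le_mul_of_nonneg_right hx (norm_nonneg _)
  obtain ⟨h, hh⟩ : ∃ h : Lp ℝ p μ, h =ᵐ[μ] e⁻¹ * f := ⟨_, hmem.coeFn_toLp⟩
  refine ⟨h, hT.eq_of_condExp_ae_eq ?_⟩
  have hcondExp_h : μ[fun y => u y * h y | m] =ᵐ[μ] e⁻¹ * η := by
    have hu : (fun y => u y * h y) =ᵐ[μ] e⁻¹ * fun y => u y * f y := by
      filter_upwards [hh] with x hx
      simp only [hx, Pi.mul_apply, Pi.inv_apply]
      ring
    exact (condExp_congr_ae hu).trans <| condExp_mul_of_stronglyMeasurable_left hinv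
      (hf.bdd_mul (hinv.mono hm).aestronglyMeasurable hinv_bound) hf
  have hTh : (fun y => u y * T h y) =ᵐ[μ] (η / e) * fun y => u y * w y := by
    filter_upwards [hT.mul_apply_ae_eq h, hcondExp_h] with x hx hcx
    simp only [hx, Pi.mul_apply, hcx, Pi.div_apply, Pi.inv_apply]
    ring
  exact (condExp_congr_ae hTh).trans <| condExp_div_condExp_mul_ae_eq hm
    stronglyMeasurable_condExp (hTf.congr (hT.mul_apply_ae_eq f)) hC hb

theorem range_sq_le_range_cube (hm : m ≤ m0) [SigmaFinite (μ.trim hm)] {C : ℝ} (hC : 0 < C)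
    (hb : ∀ᵐ x ∂μ, C ≤ |μ[fun y => u y * w y | m] x|) :
    LinearMap.range (T ^ 2).toLinearMap ≤ LinearMap.range (T ^ 3).toLinearMap := by
  rintro - ⟨f, rfl⟩
  suffices ∃ h, T (T (T h)) = T (T f) by simpa [pow_succ] using this
  by_cases hTf : Integrable (fun y => u y * T f y) μ
  · by_cases hf : Integrable (fun y => u y * f y) μ
    · obtain ⟨h, hh⟩ := hT.exists_apply_apply_eq hm hC hb hf hTf
      exact ⟨h, by rw [hh]⟩
    · exact ⟨0, by simp [hT.eq_zero_of_not_integrable hf]⟩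
  · exact ⟨0, by simp [hT.eq_zero_of_not_integrable hTf]⟩

end IsWeightedCondExpOperator

theorem wce_descent_le_two_general {X : Type*} {m m0 : MeasurableSpace X} (hm : m ≤ m0)
    (μ : Measure X) [SigmaFinite (μ.trim hm)]
    (u w : X → ℝ) (p : ℝ≥0∞) [Fact (1 ≤ p)]
    (T : Lp ℝ p μ →L[ℝ] Lp ℝ p μ)
    (hT : ∀ f : Lp ℝ p μ, (T f : X → ℝ) =ᵐ[μ]
      fun x => w x * (μ[fun y => u y * (f : X → ℝ) y | m]) x)
    (hbdd : ∃ C : ℝ, 0 < C ∧ ∀ᵐ x ∂μ, C ≤ |(μ[fun y => u y * w y | m]) x|) :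
    (∀ n : ℕ, 1 ≤ n → LinearMap.range (T ^ 2).toLinearMap = LinearMap.range (T ^ (n + 2)).toLinearMap) ∧
      LinearMap.range (T ^ 2).toLinearMap = LinearMap.range (T ^ 3).toLinearMap := by
  obtain ⟨C, hC, hb⟩ := hbdd
  have hstable (n : ℕ) :
      LinearMap.range (T ^ 2).toLinearMap = LinearMap.range (T ^ (n + 2)).toLinearMap := by
    have h := IsWeightedCondExpOperator.range_sq_le_range_cube hT hm hC hb
    simp only [ContinuousLinearMap.toLinearMap_pow] at h ⊢
    rw [add_comm]
    exact Module.End.range_pow_eq_range_pow_add h n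
  exact ⟨fun n _ => hstable n, hstable 1⟩

theorem wce_descent_le_two {X : Type*} {m m0 : MeasurableSpace X} (hm : m ≤ m0)
    (μ : Measure X) [μ.IsComplete] [SigmaFinite μ] [SigmaFinite (μ.trim hm)]
    (u w : X → ℝ) (p : ℝ≥0∞) [Fact (1 ≤ p)]
    (T : Lp ℝ p μ →L[ℝ] Lp ℝ p μ)
    (hT : ∀ f : Lp ℝ p μ, (T f : X → ℝ) =ᵐ[μ]
      fun x => w x * (μ[fun y => u y * (f : X → ℝ) y | m]) x)
    (hbdd : ∃ C : ℝ, 0 < C ∧ ∀ᵐ x ∂μ, C ≤ |(μ[fun y => u y * w y | m]) x|) :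
    (∀ n : ℕ, 1 ≤ n → LinearMap.range (T ^ 2).toLinearMap = LinearMap.range (T ^ (n + 2)).toLinearMap) ∧
      LinearMap.range (T ^ 2).toLinearMap = LinearMap.range (T ^ 3).toLinearMap :=
  wce_descent_le_two_general hm μ u w p T hT hbdd
end
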